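/- arXiv:1605.06672 — 5 statements merged into one kernel-verified Lean document; each statement's English description precedes it below -/
import Mathlib

section
/- Let q(x_1,...,x_n) be a polynomial over the rationals where the variable x_i is assigned degree i, and suppose the (weighted) degree of q is at most d. If q(m_1,...,m_n)=0 for all tuples of non-negative integers (m_1,...,m_n) satisfying m_1 + 2m_2 + ... + n m_n ≤ d, then q is the zero polynomial. -/
open scoped BigOperators

open MvPolynomial in
lemma aux_lower_set : ∀ (n : ℕ) (S : (Fin n → ℕ) → Prop)
    (_ : ∀ m m' : Fin n → ℕ, (∀ i, m' i ≤ m i) → S m → S m')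
    (q : MvPolynomial (Fin n) ℚ)
    (_ : ∀ m ∈ q.support, S m)
    (_ : ∀ m : Fin n → ℕ, S m → MvPolynomial.eval (fun i => (m i : ℚ)) q = 0), q = 0 := by
  intro n
  induction n with
  | zero =>
    intro S hlow q hsupp hz
    obtain ⟨a, rfl⟩ := MvPolynomial.C_surjective (Fin 0) q
    by_cases ha : a = 0
    · simp [ha]
    · have h0 : (0 : Fin 0 →₀ ℕ) ∈ (MvPolynomial.C (σ := Fin 0) a).support := by
        simp [MvPolynomial.mem_support_iff, ha]
      have hS := hsupp 0 h0
      have := hz _ hS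
      simp at this
      simp [this]
  | succ n IH =>
    intro S hlow q hsupp hz
    by_contra hq
    set p := MvPolynomial.finSuccEquiv ℚ n q with hpdef
    have hp : p ≠ 0 := by
      intro h
      exact hq ((MvPolynomial.finSuccEquiv ℚ n).injective (by simp [← hpdef, h]))
    set D := p.natDegree with hD
    have hlead : p.coeff D = 0 := by
      apply IH (fun m' => S (Fin.cons D m'))
      · intro m m' hle hS
        refine hlow _ _ ?_ hS
        intro i
        refine Fin.cases ?_ ?_ i
        · simp
        · intro j; simpa using hle j
      · intro m hm
        have : MvPolynomial.coeff (Finsupp.cons D m) q ≠ 0 := by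
          rw [← MvPolynomial.finSuccEquiv_coeff_coeff]
          simpa [MvPolynomial.mem_support_iff] using hm
        have hmem : Finsupp.cons D m ∈ q.support := MvPolynomial.mem_support_iff.mpr this
        have hS2 := hsupp _ hmem
        have hco : ⇑(Finsupp.cons D m) = Fin.cons D ⇑m := by
          funext i
          refine Fin.cases ?_ ?_ i <;> simp
        rwa [hco] at hS2
      · intro m' hS'
        set x' : Fin n → ℚ := fun i => (m' i : ℚ) with hx'
        set P := Polynomial.map (MvPolynomial.eval x') p with hPdef
        have hP : P = 0 := by
          apply Polynomial.eq_zero_of_natDegree_lt_card_of_eval_eq_zero'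
            P ((Finset.range (D+1)).image (Nat.cast : ℕ → ℚ))
          · intro y hy
            simp only [Finset.mem_image, Finset.mem_range] at hy
            obtain ⟨a, ha, rfl⟩ := hy
            have hcons : (fun i => ((Fin.cons a m' : Fin (n+1) → ℕ) i : ℚ))
                = Fin.cons (a : ℚ) x' := by
              funext i
              refine Fin.cases ?_ ?_ i <;> simp [hx']
            have hzz := hz (Fin.cons a m') (hlow _ _ ?_ hS')
            · rw [hcons, MvPolynomial.eval_eq_eval_mv_eval'] at hzz
              exact hzz
            · intro i
              refine Fin.cases ?_ ?_ i
              · simpa using Nat.lt_succ_iff.mp ha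
              · simp
          · calc P.natDegree ≤ p.natDegree := Polynomial.natDegree_map_le
            _ < D + 1 := by omega
            _ = ((Finset.range (D+1)).image (Nat.cast : ℕ → ℚ)).card := by
                rw [Finset.card_image_of_injective _ Nat.cast_injective, Finset.card_range]
        have : MvPolynomial.eval x' (p.coeff D) = P.coeff D := by
          simp [hPdef, Polynomial.coeff_map]
        rw [this, hP]
        simp
    exact hp (Polynomial.leadingCoeff_eq_zero.mp hlead)

/-- A polynomial `q(x_1,…,x_n)` over `ℚ` in which the variable `x_i` (here indexed by
`i : Fin n`, representing `x_{i+1}`) has weighted degree `i+1`, whose weighted degree is at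
most `d`, and which vanishes at every tuple of nonnegative integers `(m_1,…,m_n)` with
`m_1 + 2 m_2 + ⋯ + n m_n ≤ d`, is the zero polynomial. -/
theorem weighted_poly_vanishing (n d : ℕ) (q : MvPolynomial (Fin n) ℚ)
    (hdeg : ∀ m ∈ q.support, (∑ i, (i.val + 1) * m i) ≤ d)
    (hzero : ∀ m : Fin n → ℕ, (∑ i, (i.val + 1) * m i) ≤ d →
      MvPolynomial.eval (fun i => (m i : ℚ)) q = 0) :
    q = 0 := by
  apply aux_lower_set n (fun m => (∑ i, (i.val + 1) * m i) ≤ d)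
  · intro m m' hle hS
    refine le_trans (Finset.sum_le_sum ?_) hS
    intro i _
    exact Nat.mul_le_mul_left _ (hle i)
  · exact hdeg
  · exact hzero
end

section
/- For a nonnegative integer n and a partition μ, the evaluation h_n[Ξ_μ] of the complete homogeneous symmetric function at the eigenvalues of a permutation matrix with cycle type μ equals the number of weak compositions α of n of length ℓ(μ) such that μ_i divides α_i for each i. -/
/-!
`h_n(x_1, …, x_N)` is the coefficient of `t^n` in `∏ 1 / (1 - x_i t)`. For the `r`-th roots of
unity `∏_k (1 - ζ^k t) = 1 - t^r`, so the eigenvalues contributed by a part `r` of `μ` give the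
factor `1 / (1 - t^r) = ∑_{r ∣ m} t^m`, and the coefficient of `t^n` in the product of these
series counts the compositions `α` of `n` with `μ_i ∣ α_i`.
-/

open scoped BigOperators

/-- The list of `r`-th roots of unity for each part `r` of `μ` (eigenvalues of a
permutation matrix of cycle type `μ`), as a list. -/
noncomputable def xiL (μ : List ℕ) : List ℂ :=
  μ.flatMap fun r => (List.range r).map fun k =>
    Complex.exp (2 * Real.pi * Complex.I * k / r)

/-- Evaluation of the complete homogeneous symmetric function `h_n` on a list of values. -/
noncomputable def hEvalL (n : ℕ) (L : List ℂ) : ℂ :=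
  ∑ α ∈ Finset.univ.filter (fun α : Fin L.length → Fin (n + 1) => (∑ i, (α i).val) = n),
    ∏ i, L.get i ^ (α i).val

open Finset

namespace PowerSeries

variable {R : Type*}

noncomputable def geomSeries [Semiring R] (x : R) : R⟦X⟧ :=
  mk (x ^ ·)

noncomputable def multiplesSeries [Semiring R] (r : ℕ) : R⟦X⟧ :=
  mk fun m => if r ∣ m then 1 else 0

theorem multiplesSeries_zero [Semiring R] : (multiplesSeries 0 : R⟦X⟧) = 1 := by
  ext m
  simp [multiplesSeries, coeff_one]

theorem coeff_prod_eq_sum_fin [CommSemiring R] {ι : Type*} [Fintype ι] [DecidableEq ι]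
    (f : ι → R⟦X⟧) (n : ℕ) :
    coeff n (∏ i, f i) =
      ∑ α ∈ univ.filter (fun α : ι → Fin (n + 1) => ∑ i, (α i : ℕ) = n),
        ∏ i, coeff (α i) (f i) := by
  have hle {l : ι →₀ ℕ} (hl : l ∈ finsuppAntidiag univ n) (i : ι) : l i ≤ n :=
    (mem_finsuppAntidiag.1 hl).1 ▸ single_le_sum (fun _ _ => Nat.zero_le _) (mem_univ i)
  rw [coeff_prod]
  refine sum_bij' (fun l hl i => ⟨l i, Nat.lt_succ_of_le (hle hl i)⟩)
    (fun α _ => Finsupp.equivFunOnFinite.symm fun i => (α i : ℕ)) ?_ ?_ ?_ ?_ ?_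
  · intro l hl
    simpa using (mem_finsuppAntidiag.1 hl).1
  all_goals intros; simp_all

theorem coeff_prod_multiplesSeries [CommSemiring R] (n : ℕ) (μ : List ℕ) :
    coeff n (μ.map multiplesSeries : List R⟦X⟧).prod =
      ((univ.filter fun α : Fin μ.length → Fin (n + 1) =>
        (∑ i, (α i).val) = n ∧ ∀ i, μ.get i ∣ (α i).val).card : R) := by
  rw [← Fin.prod_univ_fun_getElem, coeff_prod_eq_sum_fin]
  simp [multiplesSeries, prod_boole, filter_filter]

section CommRing

variable [CommRing R]

theorem one_sub_C_mul_X_mul_geomSeries (x : R) : (1 - C x * X) * geomSeries x = 1 := by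
  have : geomSeries x = rescale x (mk 1) := by simp [geomSeries, rescale_mk]
  rw [this, ← rescale_X, ← map_one (rescale x), ← map_sub, ← map_mul, mul_comm,
    mk_one_mul_one_sub_eq_one]

theorem multiplesSeries_eq_expand {r : ℕ} (hr : r ≠ 0) :
    (multiplesSeries r : R⟦X⟧) = expand r hr (mk 1) := by
  ext m
  rw [coeff_expand]
  simp [multiplesSeries]

theorem one_sub_X_pow_mul_multiplesSeries {r : ℕ} (hr : r ≠ 0) :
    (1 - X ^ r) * (multiplesSeries r : R⟦X⟧) = 1 := by
  rw [multiplesSeries_eq_expand hr, ← expand_X r hr, ← map_one (expand r hr), ← map_sub,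
    ← map_mul, mul_comm, mk_one_mul_one_sub_eq_one, map_one]

variable [IsDomain R] {ζ : R} {r : ℕ}

/-- Set `Y = 1` in the factorisation `Y ^ r - X ^ r = ∏ k, (Y - ζ ^ k X)` over `R⟦X⟧`. -/
theorem prod_one_sub_C_pow_mul_X (hζ : IsPrimitiveRoot ζ r) (hr : r ≠ 0) :
    ∏ k ∈ range r, (1 - C (ζ ^ k) * X : R⟦X⟧) = 1 - X ^ r := by
  have h := X_pow_sub_C_eq_prod (hζ.map_of_injective (C_injective (R := R)))
    (Nat.pos_of_ne_zero hr) (rfl : (X : R⟦X⟧) ^ r = X ^ r)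
  simpa [Polynomial.eval_prod] using (congrArg (Polynomial.eval 1) h).symm

theorem prod_geomSeries_pow_eq_multiplesSeries (hζ : IsPrimitiveRoot ζ r) (hr : r ≠ 0) :
    ∏ k ∈ range r, geomSeries (ζ ^ k) = (multiplesSeries r : R⟦X⟧) := by
  calc ∏ k ∈ range r, geomSeries (ζ ^ k)
        = (1 - X ^ r) * multiplesSeries r * ∏ k ∈ range r, geomSeries (ζ ^ k) := by
        rw [one_sub_X_pow_mul_multiplesSeries hr, one_mul]
    _ = multiplesSeries r * ∏ k ∈ range r, (1 - C (ζ ^ k) * X) * geomSeries (ζ ^ k) := by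
        rw [prod_mul_distrib, prod_one_sub_C_pow_mul_X hζ hr]; ring
    _ = multiplesSeries r := by
        rw [prod_congr rfl fun k _ => one_sub_C_mul_X_mul_geomSeries _, prod_const_one, mul_one]

end CommRing

end PowerSeries

open PowerSeries

theorem prod_geomSeries_exp_eq_multiplesSeries (r : ℕ) :
    ∏ k ∈ range r, geomSeries (Complex.exp (2 * Real.pi * Complex.I * k / r)) =
      (multiplesSeries r : ℂ⟦X⟧) := by
  rcases eq_or_ne r 0 with rfl | hr
  · simp [multiplesSeries_zero]
  · rw [← prod_geomSeries_pow_eq_multiplesSeries (Complex.isPrimitiveRoot_exp r hr) hr]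
    refine prod_congr rfl fun k _ => ?_
    rw [← Complex.exp_nat_mul]
    ring_nf

theorem prod_map_geomSeries_xiL (μ : List ℕ) :
    ((xiL μ).map geomSeries).prod = (μ.map multiplesSeries).prod := by
  simp only [xiL, List.flatMap_def, List.map_flatten, List.prod_flatten, List.map_map]
  congr 1
  refine List.map_congr_left fun r _ => ?_
  rw [← prod_geomSeries_exp_eq_multiplesSeries]
  -- the `do` block in `xiL` is the coercion of `List.range r` to `List ℂ`
  simp [← List.map_eq_flatMap, Function.comp_def, prod_eq_multiset_prod, Multiset.range]

theorem hEvalL_eq_coeff_prod_geomSeries (n : ℕ) (L : List ℂ) :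
    hEvalL n L = coeff n (L.map geomSeries).prod := by
  rw [← Fin.prod_univ_fun_getElem, coeff_prod_eq_sum_fin]
  simp [hEvalL, geomSeries]

theorem hEval_at_cycle_type_general (n : ℕ) (μ : List ℕ) :
    hEvalL n (xiL μ) =
      ((Finset.univ.filter fun α : Fin μ.length → Fin (n + 1) =>
        (∑ i, (α i).val) = n ∧ ∀ i, μ.get i ∣ (α i).val).card : ℂ) := by
  rw [hEvalL_eq_coeff_prod_geomSeries, prod_map_geomSeries_xiL, coeff_prod_multiplesSeries]

/-- `h_n[Ξ_μ]` equals the number of weak compositions `α` of `n` of length `ℓ(μ)`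
with `μ_i ∣ α_i` for all `i`. -/
theorem hEval_at_cycle_type (n : ℕ) (μ : List ℕ) (hpos : ∀ i ∈ μ, 0 < i)
    (hsort : μ.Pairwise (· ≥ ·)) :
    hEvalL n (xiL μ) =
      ((Finset.univ.filter fun α : Fin μ.length → Fin (n + 1) =>
        (∑ i, (α i).val) = n ∧ ∀ i, μ.get i ∣ (α i).val).card : ℂ) :=
  hEval_at_cycle_type_general n μ
end

section
/- For partitions λ and μ, the product h_{λ_1}[Ξ_μ]·h_{λ_2}[Ξ_μ]···h_{λ_ℓ}[Ξ_μ] equals the number of sequences (α^{(1)},...,α^{(ℓ(λ))}) of weak compositions where α^{(i)} is a weak composition of λ_i of length ℓ(μ) such that μ_j divides α^{(i)}_j for all i, j. -/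
open scoped BigOperators

/-!
`h_n[L]` is the coefficient of `t^n` in `∏_{x ∈ L} (1 - x t)⁻¹`. For a primitive `r`-th root
of unity `ζ` we have `∏_{k < r} (1 - ζ^k t) = 1 - t^r`, so the block of `Ξ_μ` coming from a part
`r` contributes `(1 - t^r)⁻¹ = ∑_m t^{rm}`. Hence `h_n[Ξ_μ]` counts the weak compositions `α` of
`n` with `μ_j ∣ α_j`, and a tuple of such compositions, one for each part of `λ`, is counted by
the product.
-/

open Finset PowerSeries

def finTupleValEmbedding (k n : ℕ) : (Fin k → Fin (n + 1)) ↪ (Fin k → ℕ) :=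
  Function.Embedding.piCongrRight fun _ => Fin.valEmbedding

lemma map_finTupleValEmbedding_filter_sum_eq (k n : ℕ) :
    (univ.filter fun α : Fin k → Fin (n + 1) => ∑ i, (α i : ℕ) = n).map
      (finTupleValEmbedding k n) = Nat.antidiagonalTuple k n := by
  ext β
  simp only [mem_map, mem_filter, mem_univ, true_and, Nat.mem_antidiagonalTuple]
  constructor
  · rintro ⟨α, hα, rfl⟩
    exact hα
  · intro hβ
    have hle (i : Fin k) : β i ≤ n := hβ ▸ single_le_sum (fun _ _ => Nat.zero_le _) (mem_univ i)
    exact ⟨fun i => ⟨β i, Nat.lt_succ_of_le (hle i)⟩, hβ, rfl⟩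

lemma card_filter_forall_pi {ι : Type*} [Fintype ι] [DecidableEq ι] {α : ι → Type*}
    [∀ i, Fintype (α i)] (p : ∀ i, α i → Prop) [∀ i, DecidablePred (p i)]
    [DecidablePred fun A : ∀ i, α i => ∀ i, p i (A i)] :
    #(univ.filter fun A : ∀ i, α i => ∀ i, p i (A i)) = ∏ i, #(univ.filter (p i)) := by
  rw [← Fintype.card_piFinset]
  congr 1
  ext A
  simp [Fintype.mem_piFinset]

lemma card_filter_sum_eq_and {k n : ℕ} (p : (Fin k → ℕ) → Prop) [DecidablePred p] :
    #(univ.filter fun α : Fin k → Fin (n + 1) => ∑ i, (α i : ℕ) = n ∧ p fun i => α i) =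
      #((Nat.antidiagonalTuple k n).filter p) := by
  rw [← map_finTupleValEmbedding_filter_sum_eq, filter_map, card_map, filter_filter]
  rfl

lemma PowerSeries.coeff_prod_fin {R : Type*} [CommSemiring R] {k : ℕ} (f : Fin k → R⟦X⟧)
    (n : ℕ) :
    coeff n (∏ j, f j) = ∑ β ∈ Nat.antidiagonalTuple k n, ∏ j, coeff (β j) (f j) := by
  classical
  rw [coeff_prod, ← piAntidiag_univ_fin_eq_antidiagonalTuple, finsuppAntidiag, sum_map]
  exact sum_attach (piAntidiag univ n) fun β => ∏ j, coeff (β j) (f j)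

lemma PowerSeries.mk_pow_mul_one_sub_C_mul_X {R : Type*} [CommRing R] (x : R) :
    mk (x ^ ·) * (1 - C x * X) = 1 := by
  simpa [rescale_mk] using congrArg (rescale x) (mk_one_mul_one_sub_eq_one R)

lemma PowerSeries.prod_one_sub_C_pow_mul_X_s6 {R : Type*} [CommRing R] [IsDomain R] {ζ : R} {r : ℕ}
    (hζ : IsPrimitiveRoot ζ r) (hr : 0 < r) :
    ∏ k ∈ range r, (1 - C (ζ ^ k) * X : R⟦X⟧) = 1 - X ^ r := by
  classical
  have hζX : IsPrimitiveRoot (C ζ : R⟦X⟧) r := hζ.map_of_injective C_injective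
  have := hζX.pow_sub_pow_eq_prod_sub_mul 1 X hr
  rw [one_pow, Polynomial.nthRootsFinset, ← Multiset.toFinset_eq hζX.nthRoots_one_nodup,
    Finset.prod_mk, hζX.nthRoots_eq (one_pow r)] at this
  simpa [prod_eq_multiset_prod] using this.symm

/-- `∏_{x ∈ L} (1 - x t)⁻¹`, the generating function of the `h_n[L]`. -/
noncomputable def hSeries (L : List ℂ) : ℂ⟦X⟧ :=
  (L.map fun x => mk (x ^ ·)).prod

lemma hEvalL_eq_coeff_hSeries (n : ℕ) (L : List ℂ) : hEvalL n L = coeff n (hSeries L) := by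
  rw [hSeries, ← Fin.prod_univ_fun_getElem, coeff_prod_fin,
    ← map_finTupleValEmbedding_filter_sum_eq, sum_map, hEvalL]
  simp [finTupleValEmbedding]

noncomputable def rootsOfUnityList (r : ℕ) : List ℂ :=
  (List.range r).map fun k : ℕ => Complex.exp (2 * Real.pi * Complex.I * k / r)

lemma xiL_eq_flatMap (μ : List ℕ) : xiL μ = μ.flatMap rootsOfUnityList := by
  simp only [xiL, List.pure_def, List.bind_eq_flatMap, ← List.map_eq_flatMap, List.map_map]
  rfl

lemma hSeries_flatMap (f : ℕ → List ℂ) (μ : List ℕ) :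
    hSeries (μ.flatMap f) = (μ.map fun r => hSeries (f r)).prod := by
  rw [hSeries, List.map_flatMap, List.flatMap_def, List.prod_flatten, List.map_map]
  rfl

lemma hSeries_rootsOfUnityList_mul (r : ℕ) (hr : 0 < r) :
    hSeries (rootsOfUnityList r) * (1 - X ^ r) = 1 := by
  set ζ := Complex.exp (2 * Real.pi * Complex.I / r)
  have hζ : IsPrimitiveRoot ζ r := Complex.isPrimitiveRoot_exp r hr.ne'
  have hroots : rootsOfUnityList r = (List.range r).map (ζ ^ ·) := by
    refine List.map_congr_left fun k _ => ?_
    rw [← Complex.exp_nat_mul]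
    ring_nf
  rw [hSeries, hroots, List.map_map, ← prod_one_sub_C_pow_mul_X_s6 hζ hr, ← Multiset.prod_coe,
    ← Multiset.map_coe, Multiset.coe_range, ← range_val, ← prod_eq_multiset_prod,
    ← prod_mul_distrib]
  exact prod_eq_one fun k _ => mk_pow_mul_one_sub_C_mul_X _

lemma coeff_hSeries_rootsOfUnityList (r m : ℕ) :
    coeff m (hSeries (rootsOfUnityList r)) = if r ∣ m then 1 else 0 := by
  rcases r.eq_zero_or_pos with rfl | hr
  · simp [hSeries, rootsOfUnityList, coeff_one]
  · have hexpand : (1 - X ^ r : ℂ⟦X⟧) * expand r hr.ne' (mk 1) = 1 := by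
      rw [← expand_X r hr.ne', ← map_one (expand r hr.ne'), ← map_sub, ← map_mul, mul_comm,
        mk_one_mul_one_sub_eq_one]
    rw [left_inv_eq_right_inv (hSeries_rootsOfUnityList_mul r hr) hexpand, coeff_expand]
    split_ifs <;> simp

lemma hEvalL_xiL (n : ℕ) (μ : List ℕ) :
    hEvalL n (xiL μ) =
      #((Nat.antidiagonalTuple μ.length n).filter fun β => ∀ j, μ.get j ∣ β j) := by
  rw [hEvalL_eq_coeff_hSeries, xiL_eq_flatMap, hSeries_flatMap, ← Fin.prod_univ_fun_getElem,
    coeff_prod_fin]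
  simp [coeff_hSeries_rootsOfUnityList, prod_boole, sum_boole]

theorem hEval_prod_at_cycle_type_general (lam μ : List ℕ) :
    (∏ i : Fin lam.length, hEvalL (lam.get i) (xiL μ)) =
      ((Finset.univ.filter fun A : (i : Fin lam.length) → Fin μ.length → Fin (lam.get i + 1) =>
        ∀ i, (∑ j, (A i j).val) = lam.get i ∧ ∀ j, μ.get j ∣ (A i j).val).card : ℂ) := by
  rw [card_filter_forall_pi fun i (B : Fin μ.length → Fin (lam.get i + 1)) =>
    (∑ j, (B j).val) = lam.get i ∧ ∀ j, μ.get j ∣ (B j).val]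
  push_cast
  refine prod_congr rfl fun i _ => ?_
  rw [hEvalL_xiL, card_filter_sum_eq_and fun β => ∀ j, μ.get j ∣ β j]

/-- `h_{λ_1}[Ξ_μ] ⋯ h_{λ_ℓ}[Ξ_μ]` equals the number of sequences `(α^{(1)},…,α^{(ℓ(λ))})`
of weak compositions, where `α^{(i)}` is a weak composition of `λ_i` of length `ℓ(μ)`
with `μ_j ∣ α^{(i)}_j` for all `i, j`. -/
theorem hEval_prod_at_cycle_type (lam μ : List ℕ)
    (hlpos : ∀ i ∈ lam, 0 < i) (hlsort : lam.Pairwise (· ≥ ·))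
    (hmpos : ∀ i ∈ μ, 0 < i) (hmsort : μ.Pairwise (· ≥ ·)) :
    (∏ i : Fin lam.length, hEvalL (lam.get i) (xiL μ)) =
      ((Finset.univ.filter fun A : (i : Fin lam.length) → Fin μ.length → Fin (lam.get i + 1) =>
        ∀ i, (∑ j, (A i j).val) = lam.get i ∧ ∀ j, μ.get j ∣ (A i j).val).card : ℂ) :=
  hEval_prod_at_cycle_type_general lam μ
end

section
/- For a positive integer n and a partition μ, the evaluation e_n[Ξ_μ] of the elementary symmetric function at the eigenvalues of a permutation matrix with cycle type μ equals the signed sum over all subsets S of {1,...,ℓ(μ)} with Σ_{i∈S} μ_i = n of (-1)^{n+|S|}. -/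
open scoped BigOperators

/-- Evaluation of the elementary symmetric function `e_n` on a list of values. -/
noncomputable def eEvalL (n : ℕ) (L : List ℂ) : ℂ :=
  ∑ s ∈ Finset.powersetCard n (Finset.univ : Finset (Fin L.length)), ∏ i ∈ s, L.get i

/-!
`e_n` is the coefficient of `X ^ n` in `∏ x, (1 + x X)`. The `r`-th roots of unity `ζ ^ k`
contribute the factor `∏ k, (1 + ζ ^ k X) = 1 - (-X) ^ r`, so `e_n[Ξ_μ]` is the coefficient of
`X ^ n` in `∏ i, (1 - (-X) ^ μ_i)`; expanding this product over the sets `S` of parts picks up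
`(-1) ^ (|S| + n)` exactly when the parts in `S` sum to `n`.
-/

open Polynomial Finset

theorem Polynomial.coeff_prod_one_add_C_mul_X_pow {ι R : Type*} [CommSemiring R]
    (s : Finset ι) (a : ι → R) (d : ι → ℕ) (n : ℕ) :
    (∏ i ∈ s, (1 + C (a i) * X ^ d i)).coeff n =
      ∑ t ∈ s.powerset with ∑ i ∈ t, d i = n, ∏ i ∈ t, a i := by
  simp only [prod_one_add, prod_mul_distrib, ← map_prod, prod_pow_eq_pow_sum, finsetSum_coeff,
    coeff_C_mul_X_pow, sum_filter, eq_comm]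

theorem IsPrimitiveRoot.prod_one_sub_pow_mul {R : Type*} [CommRing R] [IsDomain R] {ζ : R}
    {r : ℕ} (hζ : IsPrimitiveRoot ζ r) (hr : 0 < r) (α : R) :
    ∏ k ∈ range r, (1 - ζ ^ k * α) = 1 - α ^ r := by
  simpa [eval_prod] using congrArg (eval 1) (X_pow_sub_C_eq_prod hζ hr rfl).symm

theorem eEvalL_eq_coeff_prod (n : ℕ) (L : List ℂ) :
    eEvalL n L = ((L.map fun x => 1 + C x * X).prod).coeff n := by
  have h := coeff_prod_one_add_C_mul_X_pow univ (fun i : Fin L.length => L[(i : ℕ)])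
    (fun _ => 1) n
  simp only [pow_one] at h
  rw [← Fin.prod_univ_fun_getElem L (fun x => 1 + C x * X), h, eEvalL, powersetCard_eq_filter]
  simp only [card_eq_sum_ones, List.get_eq_getElem]

theorem prod_range_one_add_C_exp_mul_X {r : ℕ} (hr : 0 < r) :
    ∏ k ∈ range r, (1 + C (Complex.exp (2 * Real.pi * Complex.I * k / r)) * X) =
      1 + C (-(-1) ^ r) * X ^ r := by
  have hζ : IsPrimitiveRoot (C (Complex.exp (2 * Real.pi * Complex.I / r))) r :=
    (Complex.isPrimitiveRoot_exp r hr.ne').map_of_injective C_injective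
  have hexp (k : ℕ) : Complex.exp (2 * Real.pi * Complex.I * k / r) =
      Complex.exp (2 * Real.pi * Complex.I / r) ^ k := by
    rw [← Complex.exp_nat_mul]
    ring_nf
  convert hζ.prod_one_sub_pow_mul hr (-X) using 1
  · simp only [hexp, map_pow, mul_neg, sub_neg_eq_add]
  · simp only [map_neg, map_pow, map_one, neg_mul, neg_pow (X : ℂ[X])]
    ring

theorem prod_map_xiL {M : Type*} [CommMonoid M] (f : ℂ → M) (μ : List ℕ) :
    ((xiL μ).map f).prod =
      (μ.map fun r => ∏ k ∈ range r, f (Complex.exp (2 * Real.pi * Complex.I * k / r))).prod := by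
  -- in `xiL`, `k : ℂ` comes from lifting `List.range r` to `List ℂ` in the list monad
  simp only [xiL, bind_pure_comp, List.map_eq_map, List.flatMap_def, List.map_flatten,
    List.prod_flatten, List.map_map, prod_eq_multiset_prod, range_val, ← Multiset.coe_range,
    Multiset.map_coe, Multiset.prod_coe, Function.comp_def]

theorem eEval_at_cycle_type_general (n : ℕ) (μ : List ℕ)
    (hpos : ∀ i ∈ μ, 0 < i) :
    eEvalL n (xiL μ) =
      ∑ S ∈ Finset.univ.filter (fun S : Finset (Fin μ.length) => (∑ i ∈ S, μ.get i) = n),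
        (-1 : ℂ) ^ (n + S.card) := by
  rw [eEvalL_eq_coeff_prod, prod_map_xiL, List.map_congr_left fun r hr =>
    prod_range_one_add_C_exp_mul_X (hpos r hr), ← Fin.prod_univ_fun_getElem,
    coeff_prod_one_add_C_mul_X_pow, powerset_univ]
  refine sum_congr rfl fun S hS => ?_
  have hsum : ∑ i ∈ S, μ[(i : ℕ)] = n := (mem_filter.mp hS).2
  rw [prod_neg, prod_pow_eq_pow_sum, ← pow_add, add_comm, hsum]

/-- `e_n[Ξ_μ]` equals the signed sum over all subsets `S ⊆ {1,…,ℓ(μ)}` with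
`∑_{i ∈ S} μ_i = n` of `(-1)^{n + |S|}`. -/
theorem eEval_at_cycle_type (n : ℕ) (hn : 0 < n) (μ : List ℕ)
    (hpos : ∀ i ∈ μ, 0 < i) (hsort : μ.Pairwise (· ≥ ·)) :
    eEvalL n (xiL μ) =
      ∑ S ∈ Finset.univ.filter (fun S : Finset (Fin μ.length) => (∑ i ∈ S, μ.get i) = n),
        (-1 : ℂ) ^ (n + S.card) :=
  eEval_at_cycle_type_general n μ hpos
end

section
/- For partitions λ and μ with |λ| ≤ |μ|, H_{λ,μ} := ⟨h_{|μ|-|λ|} h_λ, p_μ⟩ = Σ over all sequences of partitions (γ^{(1)},...,γ^{(ℓ(λ))}) with γ^{(i)} ⊢ λ_i, of Π_{i=1}^{μ_1} multinomial( m_i(μ) ; m_i(γ^{(1)}), ..., m_i(γ^{(ℓ(λ))}) ), with the convention that the product is 0 unless the union of parts of the γ^{(j)} is a sub-multiset of the parts of μ. -/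
open scoped BigOperators

/-- The ring of symmetric functions, modeled as polynomials in the
(algebraically independent) power sums `p_1, p_2, …`:  variable `k : ℕ+` stands for `p_k`. -/
abbrev SymF := MvPolynomial ℕ+ ℂ

/-- `z_γ = ∏ i^{m_i(γ)} m_i(γ)!`. -/
noncomputable def zPart (γ : Multiset ℕ) : ℂ :=
  ∏ i ∈ γ.toFinset, ((i : ℂ) ^ γ.count i * Nat.factorial (γ.count i))

/-- The power sum `p_γ` of a partition `γ` (with positive parts). -/
noncomputable def pMon (γ : Multiset ℕ) : SymF :=
  (γ.map fun i => if h : 0 < i then MvPolynomial.X (⟨i, h⟩ : ℕ+) else 1).prod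

/-- The complete homogeneous symmetric function `h_r = ∑_{γ ⊢ r} p_γ / z_γ`. -/
noncomputable def hPoly (r : ℕ) : SymF :=
  ∑ γ : Nat.Partition r, (zPart γ.parts)⁻¹ • pMon γ.parts

/-- `h_γ = ∏ h_{γ_i}` for a multiset of parts. -/
noncomputable def hProdM (γ : Multiset ℕ) : SymF := (γ.map hPoly).prod

/-- `z` of an exponent vector of power sums. -/
noncomputable def zOf (m : ℕ+ →₀ ℕ) : ℂ :=
  ∏ k ∈ m.support, (((k : ℕ) : ℂ) ^ m k * Nat.factorial (m k))

/-- The Hall inner product, determined by `⟨p_λ, p_μ⟩ = δ_{λμ} z_λ`. -/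
noncomputable def hall (f g : SymF) : ℂ :=
  ∑ m ∈ f.support, f.coeff m * g.coeff m * zOf m

/-- A multinomial coefficient `m! / (a_1! ⋯ a_t! (m - ∑ a_j)!)`, zero when `∑ a_j > m`. -/
def multin (m : ℕ) {t : ℕ} (a : Fin t → ℕ) : ℕ :=
  if (∑ j, a j) ≤ m then m.factorial / ((∏ j, (a j).factorial) * (m - ∑ j, a j).factorial)
  else 0

/-!
Since `⟨f, p_μ⟩ = z_μ · [p_μ] f`, only the coefficient of `p_μ` in `h_{|μ|-|λ|} h_λ` matters.
Expanding every `h_r = ∑_{δ ⊢ r} p_δ / z_δ`, a choice of partitions `γ^{(j)} ⊢ λ_j` contributes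
exactly when the union `S` of their parts is a sub-multiset of `μ`, and then the partition of
`|μ| - |λ|` is forced to be `μ - S`. The contribution `z_μ / (z_{μ - S} ∏_j z_{γ^{(j)}})` factors
over the part sizes `i`, and the factor at `i` is the multinomial coefficient of `m_i(μ)`
because the powers of `i` cancel.
-/

open MvPolynomial
open scoped Nat

-- The exponent vector of `p_γ`: parts equal to `0` are ignored, as they are by `pMon`.
noncomputable def countVec (γ : Multiset ℕ) : ℕ+ →₀ ℕ :=
  Finsupp.comapDomain PNat.val (Multiset.toFinsupp γ) PNat.coe_injective.injOn

@[simp]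
lemma countVec_apply (γ : Multiset ℕ) (k : ℕ+) : countVec γ k = γ.count (k : ℕ) := rfl

lemma countVec_add (γ δ : Multiset ℕ) : countVec (γ + δ) = countVec γ + countVec δ := by
  ext k; simp

lemma countVec_singleton (i : ℕ) :
    countVec {i} = if h : 0 < i then Finsupp.single (i.toPNat h) 1 else 0 := by
  ext k
  split_ifs with h
  · rw [Finsupp.single_apply, countVec_apply, Multiset.count_singleton]
    exact if_congr ⟨fun e => PNat.eq e.symm, fun e => congrArg PNat.val e.symm⟩ rfl rfl
  · obtain rfl : i = 0 := by omega
    simp [k.ne_zero]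

lemma pMon_zero : pMon 0 = 1 := Multiset.prod_zero

lemma pMon_add (γ δ : Multiset ℕ) : pMon (γ + δ) = pMon γ * pMon δ := by
  simp only [pMon, Multiset.map_add, Multiset.prod_add]; rfl

lemma pMon_eq_monomial (γ : Multiset ℕ) : pMon γ = monomial (countVec γ) 1 := by
  induction γ using Multiset.induction_on with
  | empty =>
    rw [show countVec 0 = 0 by ext; simp]
    exact pMon_zero.trans one_def
  | cons i γ ih =>
    rw [← Multiset.singleton_add, pMon_add, ih, countVec_add, countVec_singleton]
    split_ifs with hi
    · simp only [pMon, Multiset.map_singleton, Multiset.prod_singleton, dif_pos hi]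
      exact monomial_mul.trans (by rw [one_mul]; rfl)
    · simp only [pMon, Multiset.map_singleton, Multiset.prod_singleton, dif_neg hi]
      rw [zero_add]; exact one_mul _

lemma countVec_inj {γ δ : Multiset ℕ} (hγ : ∀ i ∈ γ, 0 < i) (hδ : ∀ i ∈ δ, 0 < i) :
    countVec γ = countVec δ ↔ γ = δ := by
  refine ⟨fun h => Multiset.ext.mpr fun i => ?_, congrArg _⟩
  rcases Nat.eq_zero_or_pos i with rfl | hi
  · rw [Multiset.count_eq_zero_of_notMem (fun h0 => (hγ 0 h0).false),
      Multiset.count_eq_zero_of_notMem (fun h0 => (hδ 0 h0).false)]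
  · exact DFunLike.congr_fun h (i.toPNat hi)

lemma pMon_sum {ι : Type*} (s : Finset ι) (g : ι → Multiset ℕ) :
    pMon (∑ i ∈ s, g i) = ∏ i ∈ s, pMon (g i) := by
  classical
  induction s using Finset.induction_on with
  | empty => exact pMon_zero
  | insert a s ha ih => rw [Finset.sum_insert ha, Finset.prod_insert ha, pMon_add, ih]

lemma zOf_countVec {γ : Multiset ℕ} (hγ : ∀ i ∈ γ, 0 < i) : zOf (countVec γ) = zPart γ := by
  refine Finset.prod_bij (fun k _ => (k : ℕ)) (fun k hk => ?_)
    (fun _ _ _ _ h => PNat.coe_injective h) (fun i hi => ?_) (fun _ _ => rfl)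
  · simpa [Multiset.count_eq_zero] using hk
  · have hiγ : i ∈ γ := Multiset.mem_toFinset.mp hi
    exact ⟨i.toPNat (hγ i hiγ), Finsupp.mem_support_iff.mpr (Multiset.count_ne_zero.mpr hiγ), rfl⟩

lemma hall_pMon (f : SymF) (μ : Multiset ℕ) :
    hall f (pMon μ) = f.coeff (countVec μ) * zOf (countVec μ) := by
  classical
  rw [hall, pMon_eq_monomial, Finset.sum_eq_single (countVec μ)]
  · simp [coeff_monomial]
  · intro m _ hm
    simp [coeff_monomial, Ne.symm hm]
  · intro hm
    simp [notMem_support_iff.mp hm]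

lemma coeff_countVec_sum_C_mul_pMon {ι : Type*} (s : Finset ι) (a : ι → ℂ)
    (g : ι → Multiset ℕ) (hg : ∀ x, ∀ i ∈ g x, 0 < i) {M : Multiset ℕ} (hM : ∀ i ∈ M, 0 < i) :
    (∑ x ∈ s, C (a x) * pMon (g x)).coeff (countVec M) =
      ∑ x ∈ s, if g x = M then a x else 0 := by
  classical
  simp only [coeff_sum, pMon_eq_monomial, coeff_C_mul, coeff_monomial, countVec_inj (hg _) hM,
    mul_ite, mul_one, mul_zero]

lemma hPoly_eq_sum (r : ℕ) :
    hPoly r = ∑ δ : Nat.Partition r, C (zPart δ.parts)⁻¹ * pMon δ.parts :=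
  Finset.sum_congr rfl fun _ _ => smul_eq_C_mul _ _

lemma hProdM_coe_eq_sum (lam : List ℕ) :
    hProdM ↑lam = ∑ γ : (i : Fin lam.length) → Nat.Partition (lam.get i),
      C (∏ i, zPart (γ i).parts)⁻¹ * pMon (∑ i, (γ i).parts) := by
  rw [hProdM, Multiset.map_coe, Multiset.prod_coe, ← Fin.prod_univ_fun_getElem]
  simp only [← List.get_eq_getElem, hPoly_eq_sum, Finset.prod_univ_sum, Fintype.piFinset_univ]
  refine Finset.sum_congr rfl fun γ _ => ?_
  rw [Finset.prod_mul_distrib, pMon_sum, ← Finset.prod_inv_distrib, map_prod]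

lemma hPoly_mul_hProdM_coe_eq_sum (r : ℕ) (lam : List ℕ) :
    hPoly r * hProdM ↑lam = ∑ p : ((i : Fin lam.length) → Nat.Partition (lam.get i)) ×
        Nat.Partition r,
      C ((zPart p.2.parts)⁻¹ * (∏ i, zPart (p.1 i).parts)⁻¹) *
        pMon (p.2.parts + ∑ i, (p.1 i).parts) := by
  rw [hPoly_eq_sum, hProdM_coe_eq_sum, Finset.sum_mul_sum, Finset.sum_comm,
    Fintype.sum_prod_type]
  refine Finset.sum_congr rfl fun γ _ => Finset.sum_congr rfl fun δ _ => ?_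
  rw [pMon_add, map_mul]
  ring

lemma Nat.Partition.pos_of_mem_sum_parts {ι : Type*} {s : Finset ι} {n : ι → ℕ}
    (γ : ∀ i, Nat.Partition (n i)) {x : ℕ} (hx : x ∈ ∑ i ∈ s, (γ i).parts) : 0 < x := by
  obtain ⟨i, -, hi⟩ := Multiset.mem_sum.mp hx
  exact (γ i).parts_pos hi

lemma Nat.Partition.sum_sum_parts {ι : Type*} (s : Finset ι) {n : ι → ℕ}
    (γ : ∀ i, Nat.Partition (n i)) : (∑ i ∈ s, (γ i).parts).sum = ∑ i ∈ s, n i := by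
  rw [← Multiset.coe_sumAddMonoidHom, map_sum]
  exact Finset.sum_congr rfl fun i _ => (γ i).parts_sum

lemma sum_partition_ite_add_eq {α : Type*} [AddCommMonoid α] {r : ℕ} {S M : Multiset ℕ}
    (hM : ∀ i ∈ M, 0 < i) (hr : r = M.sum - S.sum) (f : Multiset ℕ → α) :
    ∑ δ : Nat.Partition r, (if δ.parts + S = M then f δ.parts else 0) =
      if S ≤ M then f (M - S) else 0 := by
  split_ifs with hS
  · have hsum : (M - S).sum = r := by
      have := congrArg Multiset.sum (tsub_add_cancel_of_le hS)
      rw [Multiset.sum_add] at this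
      omega
    let δ₀ : Nat.Partition r :=
      ⟨M - S, fun hi => hM _ (Multiset.mem_of_le tsub_le_self hi), hsum⟩
    rw [Fintype.sum_eq_single δ₀ fun δ hδ => if_neg fun h => hδ (Nat.Partition.ext ?_)]
    · exact if_pos (tsub_add_cancel_of_le hS)
    · exact eq_tsub_of_add_eq h
  · exact Finset.sum_eq_zero fun δ _ => if_neg fun (h : δ.parts + S = M) => hS (h ▸ le_add_self)

lemma multin_mul_factorials {m t : ℕ} (a : Fin t → ℕ) (h : ∑ j, a j ≤ m) :
    multin m a * ((∏ j, (a j)!) * (m - ∑ j, a j)!) = m ! := by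
  rw [multin, if_pos h]
  apply Nat.div_mul_cancel
  have := Nat.prod_factorial_dvd_factorial_sum Finset.univ (Fin.cons (m - ∑ j, a j) a)
  simpa [Fin.sum_univ_succ, Fin.prod_univ_succ, mul_comm, Nat.sub_add_cancel h] using this

lemma multin_eq_div_pow_mul_factorial {i m t : ℕ} (hi : i ≠ 0) (a : Fin t → ℕ)
    (h : ∑ j, a j ≤ m) :
    (multin m a : ℂ) = (i : ℂ) ^ m * m ! /
      (((i : ℂ) ^ (m - ∑ j, a j) * (m - ∑ j, a j)!) * ∏ j, ((i : ℂ) ^ a j * (a j)!)) := by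
  have hfac : (multin m a : ℂ) * ((∏ j, ((a j)! : ℂ)) * ((m - ∑ j, a j)! : ℂ)) = m ! := by
    exact_mod_cast multin_mul_factorials a h
  have hpow : (i : ℂ) ^ m = (i : ℂ) ^ (m - ∑ j, a j) * ∏ j, (i : ℂ) ^ a j := by
    rw [Finset.prod_pow_eq_pow_sum, ← pow_add, Nat.sub_add_cancel h]
  rw [Finset.prod_mul_distrib, hpow, ← hfac]
  have hi' : (i : ℂ) ≠ 0 := by exact_mod_cast hi
  have hfac_ne (n : ℕ) : (n ! : ℂ) ≠ 0 := Nat.cast_ne_zero.mpr n.factorial_ne_zero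
  have hpows_ne : ∏ j, (i : ℂ) ^ a j ≠ 0 :=
    Finset.prod_ne_zero_iff.mpr fun j _ => pow_ne_zero _ hi'
  have hfacs_ne : ∏ j, ((a j)! : ℂ) ≠ 0 := Finset.prod_ne_zero_iff.mpr fun j _ => hfac_ne _
  have hrest_ne := hfac_ne (m - ∑ j, a j)
  field_simp

lemma zPart_eq_prod_of_subset {γ : Multiset ℕ} {T : Finset ℕ} (hT : γ.toFinset ⊆ T) :
    zPart γ = ∏ i ∈ T, ((i : ℂ) ^ γ.count i * (γ.count i)!) :=
  Finset.prod_subset hT fun i _ hi => by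
    simp [Multiset.count_eq_zero_of_notMem (mt Multiset.mem_toFinset.mpr hi)]

lemma zPart_div_eq_prod_multin {t : ℕ} (M : Multiset ℕ) (c : Fin t → Multiset ℕ)
    (hc : ∑ j, c j ≤ M) {T : Finset ℕ} (hT : M.toFinset ⊆ T) (h0 : 0 ∉ T) :
    zPart M / (zPart (M - ∑ j, c j) * ∏ j, zPart (c j)) =
      ∏ x ∈ T, (multin (M.count x) (fun j => (c j).count x) : ℂ) := by
  have hsub : ∀ {γ}, γ ≤ M → γ.toFinset ⊆ T := fun h =>
    (Multiset.toFinset_subset.mpr (Multiset.subset_of_le h)).trans hT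
  have hcj : ∀ j, c j ≤ M := fun j =>
    (Finset.single_le_sum (fun _ _ => Multiset.zero_le _) (Finset.mem_univ j)).trans hc
  rw [zPart_eq_prod_of_subset hT, zPart_eq_prod_of_subset (hsub tsub_le_self),
    Finset.prod_congr rfl fun j _ => zPart_eq_prod_of_subset (hsub (hcj j)), Finset.prod_comm,
    ← Finset.prod_mul_distrib, ← Finset.prod_div_distrib]
  refine Finset.prod_congr rfl fun x hx => ?_
  have hcount : ∑ j, (c j).count x ≤ M.count x := by
    simpa [Multiset.count_sum'] using Multiset.le_iff_count.mp hc x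
  rw [multin_eq_div_pow_mul_factorial (ne_of_mem_of_not_mem hx h0) _ hcount, Multiset.count_sub,
    Multiset.count_sum']

lemma prod_multin_eq_zero_of_not_le {t : ℕ} (M : Multiset ℕ) (c : Fin t → Multiset ℕ)
    (hc : ¬ ∑ j, c j ≤ M) {T : Finset ℕ} (hT : (∑ j, c j).toFinset ⊆ T) :
    ∏ x ∈ T, multin (M.count x) (fun j => (c j).count x) = 0 := by
  obtain ⟨x, hx⟩ : ∃ x, M.count x < (∑ j, c j).count x := by
    simpa [Multiset.le_iff_count] using hc
  have hxT : x ∈ T := hT (Multiset.mem_toFinset.mpr (Multiset.count_pos.mp (by omega)))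
  refine Finset.prod_eq_zero hxT (if_neg ?_)
  rwa [Multiset.count_sum', ← not_le] at hx

lemma toFinset_subset_Icc {s : Multiset ℕ} (hs : ∀ i ∈ s, 0 < i) {n : ℕ} (hn : s.sum ≤ n) :
    s.toFinset ⊆ Finset.Icc 1 n := fun i hi =>
  have hi := Multiset.mem_toFinset.mp hi
  Finset.mem_Icc.mpr ⟨hs i hi, (Multiset.le_sum_of_mem hi).trans hn⟩

theorem hall_h_p_eq_multinomial_sum_general (lam μ : List ℕ)
    (hmpos : ∀ i ∈ μ, 0 < i)
    (hle : lam.sum ≤ μ.sum) :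
    hall (hPoly (μ.sum - lam.sum) * hProdM ↑lam) (pMon ↑μ) =
      ∑ γ : (i : Fin lam.length) → Nat.Partition (lam.get i),
        ((∏ i ∈ Finset.Icc 1 μ.sum,
          multin (Multiset.count i ↑μ) (fun j => (γ j).parts.count i) : ℕ) : ℂ) := by
  have hμ : ∀ i ∈ (μ : Multiset ℕ), 0 < i := hmpos
  have hpos (p : ((i : Fin lam.length) → Nat.Partition (lam.get i)) ×
      Nat.Partition (μ.sum - lam.sum)) :
      ∀ i ∈ p.2.parts + ∑ j, (p.1 j).parts, 0 < i := fun i hi =>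
    (Multiset.mem_add.mp hi).elim p.2.parts_pos (Nat.Partition.pos_of_mem_sum_parts p.1)
  rw [hall_pMon, zOf_countVec hμ, hPoly_mul_hProdM_coe_eq_sum,
    coeff_countVec_sum_C_mul_pMon _ _ _ hpos hμ, Fintype.sum_prod_type, Finset.sum_mul]
  refine Finset.sum_congr rfl fun γ _ => ?_
  have hγ : (∑ j, (γ j).parts).sum = lam.sum := by
    rw [Nat.Partition.sum_sum_parts, ← Fin.sum_univ_getElem]; rfl
  simp only [Finset.sum_mul, ite_mul, zero_mul]
  rw [sum_partition_ite_add_eq hμ (by rw [Multiset.sum_coe, hγ])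
    fun δ => (zPart δ)⁻¹ * (∏ j, zPart (γ j).parts)⁻¹ * zPart μ, Nat.cast_prod]
  split_ifs with hS
  · rw [← zPart_div_eq_prod_multin _ _ hS (toFinset_subset_Icc hμ (Multiset.sum_coe μ).le)
      (by simp), div_eq_mul_inv, mul_inv, mul_comm]
  · rw [← Nat.cast_prod, prod_multin_eq_zero_of_not_le _ _ hS
      (toFinset_subset_Icc (fun _ => Nat.Partition.pos_of_mem_sum_parts γ) (hγ.trans_le hle)),
      Nat.cast_zero]

/-- `H_{λ,μ} = ⟨h_{|μ|-|λ|} h_λ, p_μ⟩` equals the sum over all sequences of partitions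
`γ^{(i)} ⊢ λ_i` of the products of multinomial coefficients
`∏_i binom(m_i(μ); m_i(γ^{(1)}),…,m_i(γ^{(ℓ(λ))}))` (which vanish unless the union of the
`γ^{(j)}` is a sub-multiset of `μ`). -/
theorem hall_h_p_eq_multinomial_sum (lam μ : List ℕ)
    (hlpos : ∀ i ∈ lam, 0 < i) (hlsort : lam.Pairwise (· ≥ ·))
    (hmpos : ∀ i ∈ μ, 0 < i) (hmsort : μ.Pairwise (· ≥ ·))
    (hle : lam.sum ≤ μ.sum) :
    hall (hPoly (μ.sum - lam.sum) * hProdM ↑lam) (pMon ↑μ) =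
      ∑ γ : (i : Fin lam.length) → Nat.Partition (lam.get i),
        ((∏ i ∈ Finset.Icc 1 μ.sum,
          multin (Multiset.count i ↑μ) (fun j => (γ j).parts.count i) : ℕ) : ℂ) :=
  hall_h_p_eq_multinomial_sum_general lam μ hmpos hle
end
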